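/- arXiv:1512.00677 — 5 statements merged into one kernel-verified Lean document; each statement's English description precedes it below -/
import Mathlib

section
/- Let pen : ℝⁿ → ℝ ∪ {+∞} be a convex function and g⁰ ∈ ℝⁿ. For ε ∈ ℝⁿ define ĝ(ε) as the unique minimizer over g ∈ ℝⁿ of (1/n)‖g - g⁰ - ε‖₂² + pen(g) (equivalently of (1/2)τ²(g) - εᵀg/n with τ²(g) = ‖g-g⁰‖₂²/n + pen(g)). Then the map ε ↦ ‖ĝ(ε) - g⁰‖₂/√n is Lipschitz with constant 1/√n with respect to the Euclidean norm on ε. -/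
set_option maxHeartbeats 1000000

open RealInnerProductSpace

/-- the map ε ↦ ‖ĝ(ε) - g⁰‖₂/√n is (1/√n)-Lipschitz, where ĝ(ε) is
the unique minimizer of g ↦ (1/n)‖g - g⁰ - ε‖₂² + pen(g) with pen convex. -/
theorem stmt_0 (n : ℕ) (hn : 0 < n)
    (pen : EuclideanSpace ℝ (Fin n) → ℝ)
    (hpen : ConvexOn ℝ Set.univ pen)
    (g0 : EuclideanSpace ℝ (Fin n))
    (ghat : EuclideanSpace ℝ (Fin n) → EuclideanSpace ℝ (Fin n))
    (hmin : ∀ ε g, (1 / (n : ℝ)) * ‖ghat ε - g0 - ε‖ ^ 2 + pen (ghat ε)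
        ≤ (1 / (n : ℝ)) * ‖g - g0 - ε‖ ^ 2 + pen g)
    (huniq : ∀ ε g, (∀ g', (1 / (n : ℝ)) * ‖g - g0 - ε‖ ^ 2 + pen g
        ≤ (1 / (n : ℝ)) * ‖g' - g0 - ε‖ ^ 2 + pen g') → g = ghat ε) :
    ∀ ε ε', |‖ghat ε - g0‖ / Real.sqrt n - ‖ghat ε' - g0‖ / Real.sqrt n|
      ≤ (1 / Real.sqrt n) * ‖ε - ε'‖ := by
  intro ε ε'
  have hc : (0:ℝ) < 1 / n := by positivity
  set c : ℝ := 1 / n with hcdef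
  set u := ghat ε with hu
  set v := ghat ε' with hv
  set x := u - g0 - ε with hx
  set y := v - g0 - ε with hy
  set d := ε - ε' with hd
  have hx2 : v - g0 - ε' = y + d := by rw [hy, hd]; abel
  have huv : u - v = x - y := by rw [hx, hy]; abel
  -- abbreviations for inner products
  set X := ⟪x, x⟫ with hX
  set Y := ⟪y, y⟫ with hY
  set P := ⟪x, y⟫ with hP
  set Xd := ⟪x, d⟫ with hXd
  set Yd := ⟪y, d⟫ with hYd
  set Dd := ⟪d, d⟫ with hDd
  have hcomm_yx : ⟪y, x⟫ = P := by rw [hP]; exact real_inner_comm x y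
  have hcomm_dx : ⟪d, x⟫ = Xd := by rw [hXd]; exact real_inner_comm x d
  have hcomm_dy : ⟪d, y⟫ = Yd := by rw [hYd]; exact real_inner_comm y d
  -- the per-t inequality
  have hstep : ∀ t : ℝ, 0 < t → t ≤ 1 →
      2 * ((X + (Y + 2*Yd + Dd)) - (P + (P + Yd + Xd + Dd)))
        ≤ t * ((X + (Y + 2*Yd + Dd)) - 2 * (P + (P + Yd + Xd + Dd))
            + (Y + (X + 2*Xd + Dd))) := by
    intro t ht ht1
    have h1 := hmin ε ((1-t) • u + t • v)
    have h2 := hmin ε' ((1-t) • v + t • u)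
    have hp1 := hpen.2 (Set.mem_univ u) (Set.mem_univ v)
      (by linarith : (0:ℝ) ≤ 1 - t) ht.le (by ring)
    have hp2 := hpen.2 (Set.mem_univ v) (Set.mem_univ u)
      (by linarith : (0:ℝ) ≤ 1 - t) ht.le (by ring)
    simp only [smul_eq_mul] at hp1 hp2
    have e1 : (1-t) • u + t • v - g0 - ε = (1-t) • x + t • y := by
      rw [hx, hy]; module
    have e2 : (1-t) • v + t • u - g0 - ε' = (1-t) • (y + d) + t • (x + d) := by
      rw [hy, hx, hd]; module
    rw [← hu, e1, ← hx] at h1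
    rw [← hv, e2, hx2] at h2
    -- rewrite norms squared as inner products
    have n1 : ‖x‖^2 = X := (real_inner_self_eq_norm_sq x).symm
    have n2 : ‖(1-t) • x + t • y‖^2
        = (1-t)^2 * X + 2*(1-t)*t*P + t^2 * Y := by
      rw [← real_inner_self_eq_norm_sq]
      simp only [inner_add_left, inner_add_right, real_inner_smul_left,
        real_inner_smul_right, hcomm_yx, ← hX, ← hY, ← hP]
      ring
    have n3 : ‖y + d‖^2 = Y + 2*Yd + Dd := by
      rw [← real_inner_self_eq_norm_sq]
      simp only [inner_add_left, inner_add_right, hcomm_dy, ← hY, ← hYd, ← hDd]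
      ring
    have n4 : ‖(1-t) • (y + d) + t • (x + d)‖^2
        = (1-t)^2 * (Y + 2*Yd + Dd) + 2*(1-t)*t*(P + Yd + Xd + Dd)
          + t^2 * (X + 2*Xd + Dd) := by
      rw [← real_inner_self_eq_norm_sq]
      simp only [inner_add_left, inner_add_right, real_inner_smul_left,
        real_inner_smul_right, hcomm_yx, hcomm_dx, hcomm_dy,
        ← hX, ← hY, ← hP, ← hXd, ← hYd, ← hDd]
      ring
    rw [n1, n2] at h1
    rw [n3, n4] at h2
    -- combine
    have key1 : c * X + pen u ≤ c * ((1-t)^2 * X + 2*(1-t)*t*P + t^2 * Y)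
        + ((1-t) * pen u + t * pen v) := le_trans h1 (by linarith [hp1])
    have key2 : c * (Y + 2*Yd + Dd) + pen v
        ≤ c * ((1-t)^2 * (Y + 2*Yd + Dd) + 2*(1-t)*t*(P + Yd + Xd + Dd)
            + t^2 * (X + 2*Xd + Dd)) + ((1-t) * pen v + t * pen u) :=
      le_trans h2 (by linarith [hp2])
    nlinarith [mul_pos hc ht, key1, key2, mul_pos (mul_pos hc ht) ht]
  -- take t → 0⁺
  set L : ℝ := 2 * ((X + (Y + 2*Yd + Dd)) - (P + (P + Yd + Xd + Dd))) with hL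
  set K : ℝ := (X + (Y + 2*Yd + Dd)) - 2 * (P + (P + Yd + Xd + Dd))
      + (Y + (X + 2*Xd + Dd)) with hK
  have hKval : K = 2 * ⟪x - y, x - y⟫ := by
    simp only [hK, inner_sub_left, inner_sub_right, hcomm_yx, ← hX, ← hY, ← hP]
    ring
  have hKnn : 0 ≤ K := by
    rw [hKval]
    have := real_inner_self_nonneg (x := x - y)
    linarith
  have hL0 : L ≤ 0 := by
    by_contra hcon
    push_neg at hcon
    have hKpos : 0 < 2*K + 2 := by linarith
    set t : ℝ := min 1 (L / (2*K + 2)) with htdef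
    have hq : L / (2*K+2) * (2*K+2) = L := div_mul_cancel₀ L (ne_of_gt hKpos)
    have hqpos : 0 < L / (2*K+2) := div_pos hcon hKpos
    have ht : 0 < t := lt_min one_pos hqpos
    have ht1 : t ≤ 1 := min_le_left _ _
    have h := hstep t ht ht1
    have htq : t ≤ L / (2*K+2) := min_le_right _ _
    have htK : t * K ≤ L / (2*K+2) * K := mul_le_mul_of_nonneg_right htq hKnn
    nlinarith [hq, hqpos, htK, h]
  -- conclude ‖u - v‖ ≤ ‖ε - ε'‖
  have hinner : ‖u - v‖^2 ≤ ⟪u - v, d⟫ := by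
    rw [huv, ← real_inner_self_eq_norm_sq]
    simp only [inner_sub_left, inner_sub_right, hcomm_yx, ← hX, ← hY, ← hP,
      ← hXd, ← hYd]
    linarith [hL0]
  have hle : ⟪u - v, d⟫ ≤ ‖u - v‖ * ‖d‖ := real_inner_le_norm _ _
  have hkey : ‖u - v‖ ≤ ‖d‖ := by
    nlinarith [norm_nonneg (u - v), norm_nonneg d, hinner, hle]
  -- finish
  have htri : |‖u - g0‖ - ‖v - g0‖| ≤ ‖u - v‖ := by
    have h := abs_norm_sub_norm_le (u - g0) (v - g0)
    have : u - g0 - (v - g0) = u - v := by abel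
    rwa [this] at h
  have hs : (0:ℝ) < Real.sqrt n := Real.sqrt_pos.2 (by positivity)
  rw [div_sub_div_same, abs_div, abs_of_pos hs, one_div, inv_mul_eq_div]
  exact (div_le_div_iff_of_pos_right hs).2 (htri.trans hkey)
end

section
/- Let F be a family of functions, f⁰ a fixed function, pen : F → [0,∞) a penalty, and P, Pₙ functionals with Pₙf, Pf ∈ ℝ for f ∈ F. Define τ²(f) = P(f - f⁰) + pen(f) (assumed nonnegative), τ_min = min_{f∈F} τ(f), Ê(s) = max_{f: τ(f) ≤ s} (Pₙ - P)(f⁰ - f), and let f̂ minimize Pₙf + pen(f) over F. If ŝ := argmin_{s ≥ τ_min} (s² - Ê(s)) is the unique minimizer and all stated minimizers/maximizers exist uniquely, then τ(f̂) = ŝ. -/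
/-- the penalized excess risk of the empirical risk minimizer equals
the minimizer ŝ of s ↦ s² - Ê(s) over s ≥ τ_min.  Here `D f` stands for
P(f - f⁰) and `En f` for (Pₙ - P)(f⁰ - f), so that `Pₙ f + pen f` equals
`D f + pen f - En f` up to a constant. -/
theorem stmt_4 {𝓕 : Type*} [Nonempty 𝓕]
    (D pen En : 𝓕 → ℝ)
    (hpen : ∀ f, 0 ≤ pen f)
    (hτ2 : ∀ f, 0 ≤ D f + pen f)
    (τ : 𝓕 → ℝ) (hτ : ∀ f, τ f = Real.sqrt (D f + pen f))
    (τmin : ℝ)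
    (hτmin : ∀ f, τmin ≤ τ f) (hτmin' : ∃ f, τ f = τmin)
    (Ehat : ℝ → ℝ)
    (hE : ∀ s, τmin ≤ s → IsGreatest (En '' {f | τ f ≤ s}) (Ehat s))
    (fhat : 𝓕)
    (hf : ∀ f, (D fhat + pen fhat) - En fhat ≤ (D f + pen f) - En f)
    (shat : ℝ) (hshat : τmin ≤ shat)
    (hsmin : ∀ s, τmin ≤ s → shat ^ 2 - Ehat shat ≤ s ^ 2 - Ehat s)
    (hsuniq : ∀ s, τmin ≤ s → (∀ s', τmin ≤ s' → s ^ 2 - Ehat s ≤ s' ^ 2 - Ehat s') →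
      s = shat) :
    τ fhat = shat := by
  have hsq : ∀ f, τ f ^ 2 = D f + pen f := fun f => by
    rw [hτ f, Real.sq_sqrt (hτ2 f)]
  set t := τ fhat with ht
  have htmin : τmin ≤ t := hτmin fhat
  -- En fhat ≤ Ehat t
  have h1 : En fhat ≤ Ehat t := (hE t htmin).2 ⟨fhat, le_refl t, rfl⟩
  refine hsuniq t htmin (fun s hs => ?_)
  obtain ⟨g, hg, hge⟩ := (hE s hs).1
  have h2 := hf g
  have hg2 : τ g ^ 2 ≤ s ^ 2 := by
    have h0 : 0 ≤ τ g := by rw [hτ g]; exact Real.sqrt_nonneg _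
    have hg' : τ g ≤ s := hg
    nlinarith [hg']
  calc t ^ 2 - Ehat t ≤ t ^ 2 - En fhat := by linarith
    _ ≤ τ g ^ 2 - En g := by rw [hsq, hsq]; exact h2
    _ ≤ s ^ 2 - Ehat s := by rw [hge]; linarith
end

section
/- Let q ∈ (1,2], s₀ > 0, M > 0 and set τ_max = (M+1)s₀. Let E : [0,∞) → ℝ be such that s̃ ↦ E(s̃^{q/2}) is concave in s̃ = s^{2/q} on the relevant domain, and suppose s₀ minimizes s ↦ s² - E(s). Then for all s with s₀ < s ≤ τ_max, [s² - E(s)] - [s₀² - E(s₀)] ≥ (2(q-1)/q) (M+1)^{-2(2-q)/q} (s - s₀)². -/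
open Real Set Filter Topology

/-! In the variable `u = s ^ (2 / q)` the objective becomes `F u = u ^ q - E (u ^ (q / 2))`.
On `[0, s ^ (2 / q)]` the power `u ^ q` is strongly convex with modulus
`q (q - 1) (s ^ (2 / q)) ^ (q - 2)`, because its second derivative decreases when `q ≤ 2`, and
`E (u ^ (q / 2))` is concave; so `F` is strongly convex there and has its minimum at
`s₀ ^ (2 / q)`, which yields a quadratic margin in `u`. The tangent line of the convex map
`s ↦ s ^ (2 / q)` at `s₀` converts it into a margin in `s`, with the factor
`(s₀ / s) ^ (2 (2 - q) / q)`, and `s ≤ (M + 1) s₀` bounds that factor below by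
`(M + 1) ^ (-2 (2 - q) / q)`. -/

lemma StrongConvexOn.sub_concaveOn {E : Type*} [NormedAddCommGroup E] [NormedSpace ℝ E]
    {s : Set E} {m : ℝ} {f g : E → ℝ} (hf : StrongConvexOn s m f) (hg : ConcaveOn ℝ s g) :
    StrongConvexOn s m (f - g) := by
  have := hf.sub hg.uniformConcaveOn_zero
  rwa [add_zero] at this

lemma StrongConvexOn.add_le_of_isMinOn {E : Type*} [NormedAddCommGroup E] [NormedSpace ℝ E]
    {s : Set E} {m : ℝ} {f : E → ℝ} {x₀ x : E} (hf : StrongConvexOn s m f)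
    (hmin : IsMinOn f s x₀) (hx₀ : x₀ ∈ s) (hx : x ∈ s) :
    f x₀ + m / 2 * ‖x - x₀‖ ^ 2 ≤ f x := by
  have hsegment : ∀ t ∈ Ioo (0 : ℝ) 1, (1 - t) * (m / 2 * ‖x - x₀‖ ^ 2) ≤ f x - f x₀ := by
    rintro t ⟨ht₀, ht₁⟩
    have hconv := hf.2 hx hx₀ ht₀.le (sub_nonneg.2 ht₁.le) (add_sub_cancel t 1)
    have hmin_t :=
      isMinOn_iff.1 hmin _ (hf.1 hx hx₀ ht₀.le (sub_nonneg.2 ht₁.le) (add_sub_cancel t 1))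
    simp only [smul_eq_mul] at hconv hmin_t
    nlinarith
  have hlim : Tendsto (fun t : ℝ => (1 - t) * (m / 2 * ‖x - x₀‖ ^ 2)) (𝓝[>] 0)
      (𝓝 (m / 2 * ‖x - x₀‖ ^ 2)) := by
    refine tendsto_nhdsWithin_of_tendsto_nhds ?_
    convert ((continuous_const.sub continuous_id).mul continuous_const).tendsto
      (f := fun t : ℝ => (1 - t) * (m / 2 * ‖x - x₀‖ ^ 2)) 0 using 2
    simp
  have := le_of_tendsto hlim (eventually_of_mem (Ioo_mem_nhdsGT one_pos) hsegment)
  linarith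

lemma strongConvexOn_rpow_Icc {p U : ℝ} (hp : 1 ≤ p) (hp2 : p ≤ 2) :
    StrongConvexOn (Icc 0 U) (p * (p - 1) * U ^ (p - 2)) (fun x : ℝ => x ^ p) := by
  set c := p * (p - 1) * U ^ (p - 2)
  rw [strongConvexOn_iff_convex]
  simp only [Real.norm_eq_abs, sq_abs]
  refine convexOn_of_hasDerivWithinAt2_nonneg (f' := fun x => p * x ^ (p - 1) - c * x)
    (f'' := fun x => p * ((p - 1) * x ^ (p - 2)) - c) (convex_Icc 0 U) ?_ ?_ ?_ ?_
  · refine ContinuousOn.sub (fun x _ => ?_) (by fun_prop)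
    exact (continuousAt_rpow_const x p (Or.inr (by linarith))).continuousWithinAt
  all_goals simp only [interior_Icc]
  · rintro x ⟨hx, -⟩
    refine HasDerivAt.hasDerivWithinAt ?_
    refine ((hasDerivAt_rpow_const (p := p) (Or.inl hx.ne')).sub
      ((hasDerivAt_pow 2 x).const_mul (c / 2))).congr_deriv ?_
    ring
  · rintro x ⟨hx, -⟩
    refine HasDerivAt.hasDerivWithinAt ?_
    refine (((hasDerivAt_rpow_const (p := p - 1) (Or.inl hx.ne')).const_mul p).sub
      ((hasDerivAt_id x).const_mul c)).congr_deriv ?_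
    rw [sub_sub, one_add_one_eq_two, mul_one]
  · rintro x ⟨hx, hxU⟩
    have : U ^ (p - 2) ≤ x ^ (p - 2) := rpow_le_rpow_of_nonpos hx hxU.le (by linarith)
    have : 0 ≤ p * (p - 1) := by nlinarith
    simp only [c]
    nlinarith

lemma mul_rpow_sub_one_mul_sub_le_rpow_sub_rpow {a x y : ℝ} (ha : 1 ≤ a) (hx : 0 < x)
    (hy : 0 ≤ y) : a * x ^ (a - 1) * (y - x) ≤ y ^ a - x ^ a := by
  have hbernoulli := one_add_mul_self_le_rpow_one_add
    (by linarith [div_nonneg hy hx.le] : -1 ≤ y / x - 1) ha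
  rw [add_sub_cancel, div_rpow hy hx.le, le_div_iff₀ (rpow_pos_of_pos hx a)] at hbernoulli
  have hexpand : (1 + a * (y / x - 1)) * x ^ a = x ^ a + a * (x ^ a / x) * (y - x) := by
    field_simp
  rw [rpow_sub_one hx.ne']
  linarith

lemma quadratic_margin_coeff_le {q s₀ s M : ℝ} (hq : 1 < q) (hq2 : q ≤ 2) (hs₀ : 0 < s₀)
    (hs : s₀ ≤ s) (hsM : s ≤ (M + 1) * s₀) :
    2 * (q - 1) / q * (M + 1) ^ (-(2 * (2 - q) / q)) * (s - s₀) ^ 2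
      ≤ q * (q - 1) * (s ^ (2 / q)) ^ (q - 2) / 2 * (s ^ (2 / q) - s₀ ^ (2 / q)) ^ 2 := by
  have hq0 : 0 < q := by linarith
  have hs0 : 0 < s := hs₀.trans_le hs
  set β := 2 * (2 - q) / q with hβ_def
  have htangent : 2 / q * s₀ ^ (2 / q - 1) * (s - s₀) ≤ s ^ (2 / q) - s₀ ^ (2 / q) :=
    mul_rpow_sub_one_mul_sub_le_rpow_sub_rpow (by rw [le_div_iff₀ hq0]; linarith) hs₀ hs0.le
  have hβ : 0 ≤ β := div_nonneg (by linarith) hq0.le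
  have hratio : (M + 1) ^ (-β) ≤ (s₀ / s) ^ β := by
    rw [← inv_div, inv_rpow (div_pos hs0 hs₀).le, ← rpow_neg (div_pos hs0 hs₀).le]
    exact rpow_le_rpow_of_nonpos (div_pos hs0 hs₀) ((div_le_iff₀ hs₀).2 hsM) (by linarith)
  have hidentity : q * (q - 1) * (s ^ (2 / q)) ^ (q - 2) / 2 * (2 / q * s₀ ^ (2 / q - 1)) ^ 2
      = 2 * (q - 1) / q * (s₀ / s) ^ β := by
    have hs_pow : (s ^ (2 / q)) ^ (q - 2) = s ^ (-β) := by
      rw [← rpow_mul hs0.le]; congr 1; rw [hβ_def]; field_simp; ring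
    have hs₀_pow : (s₀ ^ (2 / q - 1)) ^ 2 = s₀ ^ β := by
      rw [← rpow_natCast, ← rpow_mul hs₀.le]; congr 1; rw [hβ_def]; field_simp; ring
    rw [mul_pow, hs_pow, hs₀_pow, div_rpow hs₀.le hs0.le, rpow_neg hs0.le]
    field_simp
  calc 2 * (q - 1) / q * (M + 1) ^ (-β) * (s - s₀) ^ 2
      ≤ 2 * (q - 1) / q * (s₀ / s) ^ β * (s - s₀) ^ 2 := by
        gcongr
    _ = q * (q - 1) * (s ^ (2 / q)) ^ (q - 2) / 2
          * (2 / q * s₀ ^ (2 / q - 1) * (s - s₀)) ^ 2 := by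
        rw [mul_pow, ← mul_assoc, hidentity]
    _ ≤ q * (q - 1) * (s ^ (2 / q)) ^ (q - 2) / 2 * (s ^ (2 / q) - s₀ ^ (2 / q)) ^ 2 := by
        gcongr

theorem stmt_6_general (q s₀ M : ℝ) (hq : 1 < q) (hq2 : q ≤ 2) (hs₀ : 0 < s₀)
    (E : ℝ → ℝ)
    (hconc : ConcaveOn ℝ (Set.Ici (0:ℝ)) (fun s' : ℝ => E (s' ^ (q / 2))))
    (hmin : ∀ s : ℝ, 0 ≤ s → s₀ ^ 2 - E s₀ ≤ s ^ 2 - E s) :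
    ∀ s : ℝ, s₀ < s → s ≤ (M + 1) * s₀ →
      (2 * (q - 1) / q) * (M + 1) ^ (-(2 * (2 - q) / q)) * (s - s₀) ^ 2
        ≤ (s ^ 2 - E s) - (s₀ ^ 2 - E s₀) := by
  intro s hs hsM
  have hq0 : 0 < q := by linarith
  have hs0 : 0 < s := hs₀.trans hs
  set F : ℝ → ℝ := fun x => x ^ q - E (x ^ (q / 2))
  have hF_eq : ∀ x, 0 ≤ x → F x = (x ^ (q / 2)) ^ 2 - E (x ^ (q / 2)) := by
    intro x hx
    rw [← rpow_natCast, ← rpow_mul hx]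
    norm_num [F]
  have hF_at : ∀ x, 0 ≤ x → F (x ^ (2 / q)) = x ^ 2 - E x := by
    intro x hx
    rw [hF_eq _ (by positivity), ← inv_div 2 q, rpow_rpow_inv hx (by positivity)]
  set U := s ^ (2 / q)
  have hconvex : StrongConvexOn (Icc 0 U) (q * (q - 1) * U ^ (q - 2)) F :=
    (strongConvexOn_rpow_Icc hq.le hq2).sub_concaveOn
      (hconc.subset Icc_subset_Ici_self (convex_Icc 0 U))
  have hIsMin : IsMinOn F (Icc 0 U) (s₀ ^ (2 / q)) := by
    refine isMinOn_iff.2 fun x hx => ?_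
    rw [hF_at s₀ hs₀.le, hF_eq x hx.1]
    exact hmin _ (rpow_nonneg hx.1 _)
  have hmargin := hconvex.add_le_of_isMinOn hIsMin
    ⟨by positivity, rpow_le_rpow hs₀.le hs.le (by positivity)⟩ ⟨rpow_nonneg hs0.le _, le_rfl⟩
  rw [hF_at s₀ hs₀.le, hF_at s hs0.le, Real.norm_eq_abs, sq_abs] at hmargin
  linarith [quadratic_margin_coeff_le hq hq2 hs₀ hs.le hsM]

/-- right-sided second-order quadratic margin under concavity of
s̃ ↦ E(s̃^{q/2}). -/
theorem stmt_6 (q s₀ M : ℝ) (hq : 1 < q) (hq2 : q ≤ 2) (hs₀ : 0 < s₀) (hM : 0 < M)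
    (E : ℝ → ℝ)
    (hconc : ConcaveOn ℝ (Set.Ici (0:ℝ)) (fun s' : ℝ => E (s' ^ (q / 2))))
    (hmin : ∀ s : ℝ, 0 ≤ s → s₀ ^ 2 - E s₀ ≤ s ^ 2 - E s) :
    ∀ s : ℝ, s₀ < s → s ≤ (M + 1) * s₀ →
      (2 * (q - 1) / q) * (M + 1) ^ (-(2 * (2 - q) / q)) * (s - s₀) ^ 2
        ≤ (s ^ 2 - E s) - (s₀ ^ 2 - E s₀) :=
  stmt_6_general q s₀ M hq hq2 hs₀ E hconc hmin
end

section
/- Let (X,μ) be a probability space and g measurable with μ-mean zero and ‖g‖_∞ ≤ η ≤ 1. Then there is an absolute constant C such that | log ∫ exp(g) dμ - (1/2)∫ g² dμ | ≤ C η ∫ g² dμ. -/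
/-!
Expanding `exp g = 1 + g + g²/2 + O(|g|³)` and integrating, the centering kills the linear term, so
`∫ e^g dμ = 1 + u` with `u = (1/2)∫ g² dμ + O(η ∫ g² dμ)`. Since `0 ≤ u ≤ ∫ g² ≤ η²`, the logarithm
satisfies `log (1 + u) = u + O(u²)` and `u² ≤ η ∫ g²`, which absorbs into the error term.
-/

open MeasureTheory

namespace Real

lemma abs_exp_sub_one_sub_id_sub_half_sq_le {t : ℝ} (ht : |t| ≤ 1) :
    |exp t - (1 + t + t ^ 2 / 2)| ≤ 2 / 9 * |t| ^ 3 := by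
  have h := exp_bound ht (n := 3) (by norm_num)
  simp only [Finset.sum_range_succ, Finset.sum_range_zero] at h
  norm_num [Nat.factorial] at h
  linarith

lemma abs_log_one_add_sub_self_le {u : ℝ} (hu : 0 ≤ u) : |log (1 + u) - u| ≤ u ^ 2 := by
  have hpos : 0 < 1 + u := by linarith
  have upper : log (1 + u) ≤ u := by linarith [log_le_sub_one_of_pos hpos]
  have inv_le : (1 + u)⁻¹ ≤ 1 - u + u ^ 2 := by
    rw [inv_le_iff_one_le_mul₀ hpos]
    nlinarith [pow_nonneg hu 3]
  have lower : u - u ^ 2 ≤ log (1 + u) := by linarith [one_sub_inv_le_log_of_pos hpos]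
  rw [abs_le]
  constructor <;> linarith

lemma abs_log_sub_half_le {I S η : ℝ} (hη0 : 0 ≤ η) (hη1 : η ≤ 1) (hS0 : 0 ≤ S)
    (hSη : S ≤ η ^ 2) (hI : |I - (1 + S / 2)| ≤ 2 / 9 * η * S) :
    |log I - S / 2| ≤ 2 * η * S := by
  obtain ⟨u, rfl⟩ : ∃ u, I = 1 + u := ⟨I - 1, by ring⟩
  have hηS : η * S ≤ S := mul_le_of_le_one_left hS0 hη1
  obtain ⟨hlo, hhi⟩ := abs_le.1 hI
  have hu0 : 0 ≤ u := by linarith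
  have huS : u ≤ S := by linarith
  have hu2 : u ^ 2 ≤ η * S := by
    calc u ^ 2 ≤ S * S := by nlinarith
      _ ≤ η ^ 2 * S := mul_le_mul_of_nonneg_right hSη hS0
      _ ≤ η * S := mul_le_mul_of_nonneg_right (by nlinarith) hS0
  calc |log (1 + u) - S / 2| = |(log (1 + u) - u) + (1 + u - (1 + S / 2))| := by ring_nf
    _ ≤ |log (1 + u) - u| + |1 + u - (1 + S / 2)| := abs_add_le _ _
    _ ≤ u ^ 2 + 2 / 9 * η * S := add_le_add (abs_log_one_add_sub_self_le hu0) hI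
    _ ≤ 2 * η * S := by nlinarith

end Real

section

variable {X : Type*} [MeasurableSpace X] {μ : Measure X} {g : X → ℝ}

lemma abs_integral_exp_sub_one_add_half_integral_sq_le [IsProbabilityMeasure μ] {η : ℝ}
    (hg : AEStronglyMeasurable g μ) (hη1 : η ≤ 1) (hgη : ∀ x, |g x| ≤ η)
    (hmean : ∫ x, g x ∂μ = 0) :
    |∫ x, Real.exp (g x) ∂μ - (1 + (∫ x, g x ^ 2 ∂μ) / 2)| ≤ 2 / 9 * η * ∫ x, g x ^ 2 ∂μ := by
  have hg1 x : |g x| ≤ 1 := (hgη x).trans hη1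
  have bounded {f : X → ℝ} (hf : AEStronglyMeasurable f μ) (C : ℝ) (hC : ∀ x, |f x| ≤ C) :
      Integrable f μ :=
    Integrable.of_bound hf C (.of_forall hC)
  have hg_int : Integrable g μ := bounded hg 1 hg1
  have hsq_int : Integrable (fun x ↦ g x ^ 2) μ :=
    bounded (hg.pow 2) 1 fun x ↦ by
      rw [abs_pow]
      exact pow_le_one₀ (abs_nonneg _) (hg1 x)
  have hexp_int : Integrable (fun x ↦ Real.exp (g x)) μ :=
    bounded (Real.continuous_exp.comp_aestronglyMeasurable hg) (Real.exp 1) fun x ↦ by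
      rw [abs_of_pos (Real.exp_pos _)]
      exact Real.exp_le_exp.2 ((le_abs_self _).trans (hg1 x))
  have hlin_int : Integrable (fun x ↦ 1 + g x) μ := (integrable_const 1).add hg_int
  have hpoly_int : Integrable (fun x ↦ 1 + g x + g x ^ 2 / 2) μ :=
    hlin_int.add (hsq_int.div_const 2)
  have hpoly : ∫ x, (1 + g x + g x ^ 2 / 2) ∂μ = 1 + (∫ x, g x ^ 2 ∂μ) / 2 := by
    rw [integral_add hlin_int (hsq_int.div_const 2),
      integral_add (integrable_const 1) hg_int, integral_div, hmean]
    simp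
  have remainder_le x : |Real.exp (g x) - (1 + g x + g x ^ 2 / 2)| ≤ 2 / 9 * η * g x ^ 2 := by
    calc _ ≤ 2 / 9 * (|g x| * |g x| ^ 2) := by
          rw [← pow_succ']; exact Real.abs_exp_sub_one_sub_id_sub_half_sq_le (hg1 x)
      _ ≤ 2 / 9 * η * g x ^ 2 := by
          rw [sq_abs, mul_assoc]
          gcongr
          exact hgη x
  rw [← hpoly, ← integral_sub hexp_int hpoly_int, ← integral_const_mul]
  exact (norm_integral_le_integral_norm _).trans <|
    integral_mono (hexp_int.sub hpoly_int).norm (hsq_int.const_mul _) remainder_le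

end

/-- for centered g with ‖g‖_∞ ≤ η ≤ 1,
|log ∫ e^g dμ - (1/2)∫ g² dμ| ≤ C η ∫ g² dμ for an absolute constant C. -/
theorem stmt_10 {X : Type*} [MeasurableSpace X] (μ : Measure X) [IsProbabilityMeasure μ] :
    ∃ C > (0:ℝ), ∀ (g : X → ℝ) (η : ℝ), Measurable g → 0 ≤ η → η ≤ 1 →
      (∀ x, |g x| ≤ η) → (∫ x, g x ∂μ) = 0 →
      |Real.log (∫ x, Real.exp (g x) ∂μ) - (1 / 2) * ∫ x, (g x) ^ 2 ∂μ|
        ≤ C * η * ∫ x, (g x) ^ 2 ∂μ := by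
  refine ⟨2, two_pos, fun g η hg hη0 hη1 hgη hmean ↦ ?_⟩
  have hS0 : 0 ≤ ∫ x, g x ^ 2 ∂μ := integral_nonneg fun x ↦ sq_nonneg _
  have hSη : ∫ x, g x ^ 2 ∂μ ≤ η ^ 2 := by
    calc ∫ x, g x ^ 2 ∂μ ≤ ∫ _, η ^ 2 ∂μ :=
          integral_mono_of_nonneg (.of_forall fun x ↦ sq_nonneg _) (integrable_const _)
            (.of_forall fun x ↦ sq_le_sq' (abs_le.1 (hgη x)).1 (abs_le.1 (hgη x)).2)
      _ = η ^ 2 := by simp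
  rw [one_div_mul_eq_div]
  exact Real.abs_log_sub_half_le hη0 hη1 hS0 hSη
    (abs_integral_exp_sub_one_add_half_integral_sq_le hg.aestronglyMeasurable hη1 hgη hmean)
end

section
/- Let G be a convex subset of a vector space, L : G → ℝ with g ↦ L(g) affine, and suppose for some q > 1 the map g ↦ T(g)^{2/q} is convex where T : G → [0,∞). Define Ê(s) := sup{ L(g) : g ∈ G, T(g) ≤ s }. Then the map s̃ ↦ Ê(s̃^{q/2}) is concave on { s̃ ≥ T_min^{2/q} }, where T_min = inf_{g∈G} T(g). -/
/-- if L is affine and g ↦ T(g)^{2/q} is convex on the convex set 𝓖,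
then s̃ ↦ Ê(s̃^{q/2}) is concave on {s̃ ≥ T_min^{2/q}}, where
Ê(s) = sup{L(g) : g ∈ 𝓖, T(g) ≤ s}. -/
theorem stmt_15 {V : Type*} [AddCommGroup V] [Module ℝ V]
    (𝓖 : Set V) (h𝓖 : Convex ℝ 𝓖) (q : ℝ) (hq : 1 < q)
    (L : V → ℝ)
    (hL : ∀ g₁ g₂ : V, ∀ t : ℝ, t ∈ Set.Icc (0:ℝ) 1 →
      L (t • g₁ + (1 - t) • g₂) = t * L g₁ + (1 - t) * L g₂)
    (T : V → ℝ) (hT0 : ∀ g ∈ 𝓖, 0 ≤ T g)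
    (hconv : ∀ g₁ ∈ 𝓖, ∀ g₂ ∈ 𝓖, ∀ t : ℝ, t ∈ Set.Icc (0:ℝ) 1 →
      T (t • g₁ + (1 - t) • g₂) ^ (2 / q) ≤ t * T g₁ ^ (2 / q) + (1 - t) * T g₂ ^ (2 / q))
    (Tmin : ℝ) (hTmin0 : 0 ≤ Tmin)
    (hTmin : ∀ g ∈ 𝓖, Tmin ≤ T g) (hTmin' : ∃ g ∈ 𝓖, T g ≤ Tmin)
    (Ehat : ℝ → ℝ)
    (hE : ∀ s, Tmin ≤ s → IsLUB {x | ∃ g ∈ 𝓖, T g ≤ s ∧ x = L g} (Ehat s)) :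
    ConcaveOn ℝ (Set.Ici (Tmin ^ (2 / q))) (fun s' : ℝ => Ehat (s' ^ (q / 2))) := by
  have hq0 : (0:ℝ) < q := lt_trans one_pos hq
  have h2q : (0:ℝ) ≤ 2 / q := by positivity
  have hq2 : (0:ℝ) ≤ q / 2 := by positivity
  have hmul : (2 / q) * (q / 2) = 1 := by field_simp
  have hmul' : (q / 2) * (2 / q) = 1 := by field_simp
  have hTm0 : (0:ℝ) ≤ Tmin ^ (2/q) := Real.rpow_nonneg hTmin0 _
  have key : ∀ z : ℝ, Tmin ^ (2/q) ≤ z → Tmin ≤ z ^ (q/2) := by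
    intro z hz
    have h := Real.rpow_le_rpow hTm0 hz hq2
    rwa [← Real.rpow_mul hTmin0, hmul, Real.rpow_one] at h
  constructor
  · exact convex_Ici _
  intro x hx y hy a b ha hb hab
  simp only [smul_eq_mul]
  have hb' : b = 1 - a := by linarith
  subst hb'
  have ha1 : a ≤ 1 := by linarith
  have hx0 : (0:ℝ) ≤ x := le_trans hTm0 hx
  have hy0 : (0:ℝ) ≤ y := le_trans hTm0 hy
  have hx' : Tmin ^ (2/q) ≤ x := hx
  have hy' : Tmin ^ (2/q) ≤ y := hy
  have hxy : Tmin ^ (2/q) ≤ a * x + (1-a) * y := by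
    nlinarith [mul_le_mul_of_nonneg_left hx' ha, mul_le_mul_of_nonneg_left hy' hb]
  have hxq : Tmin ≤ x ^ (q/2) := key x hx
  have hyq : Tmin ≤ y ^ (q/2) := key y hy
  have hstq : Tmin ≤ (a * x + (1-a) * y) ^ (q/2) := key _ hxy
  have hE1 := hE _ hxq
  have hE2 := hE _ hyq
  have hEt := hE _ hstq
  refine le_of_forall_sub_le ?_
  intro ε hε
  obtain ⟨x1, hx1mem, hx1gt, -⟩ :=
    hE1.exists_between (show Ehat (x ^ (q/2)) - ε < Ehat (x ^ (q/2)) by linarith)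
  obtain ⟨g₁, hg₁, hTg₁, rfl⟩ := hx1mem
  obtain ⟨x2, hx2mem, hx2gt, -⟩ :=
    hE2.exists_between (show Ehat (y ^ (q/2)) - ε < Ehat (y ^ (q/2)) by linarith)
  obtain ⟨g₂, hg₂, hTg₂, rfl⟩ := hx2mem
  have hgt : a • g₁ + (1-a) • g₂ ∈ 𝓖 := h𝓖 hg₁ hg₂ ha (by linarith) (by ring)
  have hB1 : T g₁ ^ (2/q) ≤ x := by
    have h := Real.rpow_le_rpow (hT0 g₁ hg₁) hTg₁ h2q
    rwa [← Real.rpow_mul hx0, hmul', Real.rpow_one] at h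
  have hB2 : T g₂ ^ (2/q) ≤ y := by
    have h := Real.rpow_le_rpow (hT0 g₂ hg₂) hTg₂ h2q
    rwa [← Real.rpow_mul hy0, hmul', Real.rpow_one] at h
  have hA := hconv g₁ hg₁ g₂ hg₂ a ⟨ha, ha1⟩
  have hC : T (a • g₁ + (1-a) • g₂) ^ (2/q) ≤ a * x + (1-a) * y := by
    refine le_trans hA ?_
    have := mul_le_mul_of_nonneg_left hB1 ha
    have := mul_le_mul_of_nonneg_left hB2 (by linarith : (0:ℝ) ≤ 1 - a)
    linarith
  have hTt : T (a • g₁ + (1-a) • g₂) ≤ (a * x + (1-a) * y) ^ (q/2) := by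
    have h := Real.rpow_le_rpow (Real.rpow_nonneg (hT0 _ hgt) _) hC hq2
    rwa [← Real.rpow_mul (hT0 _ hgt), hmul, Real.rpow_one] at h
  have hle := hEt.1 ⟨_, hgt, hTt, rfl⟩
  have hLeq := hL g₁ g₂ a ⟨ha, ha1⟩
  rw [hLeq] at hle
  nlinarith [mul_le_mul_of_nonneg_left hx1gt.le ha,
    mul_le_mul_of_nonneg_left hx2gt.le (by linarith : (0:ℝ) ≤ 1 - a)]
end
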